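/- arXiv:1609.08279 — 6 statements merged into one kernel-verified Lean document; each statement's English description precedes it below -/
import Mathlib

section
/- Let k be a number field and μ a positive integer. If f : k → k is a ℚ-linear map such that f(a^μ · x) = a^μ · f(x) for all a, x ∈ k, then there exists c ∈ k such that f(x) = c · x for all x ∈ k. -/
/-!
Over a ℚ-algebra the μ-th powers span everything: if a ℚ-linear functional `φ` kills all μ-th
powers, then `q ↦ φ ((q + a) ^ μ)` is a polynomial in `q ∈ ℚ` vanishing identically, and its
coefficient of `q ^ (μ - 1)` is `μ • φ a`. Hence `b ↦ f (b * x) - b * f x`, which is ℚ-linear and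
vanishes on μ-th powers, vanishes everywhere, and `f` is multiplication by `f 1`.
-/

open Polynomial Finset

theorem LinearMap.eq_zero_of_map_pow_eq_zero {A : Type*} [CommRing A] [Algebra ℚ A] {n : ℕ}
    (hn : 0 < n) (φ : A →ₗ[ℚ] ℚ) (h : ∀ b, φ (b ^ n) = 0) : φ = 0 := by
  ext a
  set p : ℚ[X] := ∑ i ∈ Finset.range (n + 1), C (n.choose i * φ (a ^ (n - i))) * X ^ i
  have hp_eval (q : ℚ) : p.eval q = φ ((algebraMap ℚ A q + a) ^ n) := by
    rw [add_pow, map_sum, eval_finsetSum]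
    refine sum_congr rfl fun i _ => ?_
    rw [← map_pow, ← map_natCast (algebraMap ℚ A), mul_right_comm, ← map_mul, ← Algebra.smul_def,
      map_smul, smul_eq_mul]
    simp only [eval_mul, eval_C, eval_X_pow]
    ring
  have hp : p = 0 := Polynomial.funext fun q => by simp [hp_eval, h]
  have hcoeff := congrArg (coeff · (n - 1)) hp
  simp only [p, finsetSum_coeff, coeff_C_mul_X_pow, coeff_zero] at hcoeff
  rw [sum_ite_eq, if_pos (Finset.mem_range.2 (by omega)), Nat.sub_sub_self hn, pow_one,
    Nat.choose_symm hn, Nat.choose_one_right] at hcoeff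
  simpa [hn.ne'] using hcoeff

theorem Submodule.span_range_pow_eq_top (A : Type*) [CommRing A] [Algebra ℚ A] {n : ℕ}
    (hn : 0 < n) : span ℚ (Set.range fun a : A => a ^ n) = ⊤ := by
  refine eq_top_iff'.2 fun a => by_contra fun ha => ?_
  obtain ⟨φ, hφa, hφ⟩ := exists_le_ker_of_notMem ha
  refine hφa (LinearMap.congr_fun (φ.eq_zero_of_map_pow_eq_zero hn fun b => ?_) a)
  exact hφ (subset_span ⟨b, rfl⟩)

theorem LinearMap.map_mul_of_map_pow_mul {A : Type*} [CommRing A] [Algebra ℚ A] {n : ℕ}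
    (hn : 0 < n) (f : A →ₗ[ℚ] A) (hf : ∀ a x : A, f (a ^ n * x) = a ^ n * f x) (a x : A) :
    f (a * x) = a * f x := by
  let D : A →ₗ[ℚ] A := f ∘ₗ mulRight ℚ x - mulRight ℚ (f x)
  have hD : Submodule.span ℚ (Set.range fun b : A => b ^ n) ≤ ker D :=
    Submodule.span_le.2 <| by rintro _ ⟨b, rfl⟩; simp [D, hf]
  rw [Submodule.span_range_pow_eq_top A hn, top_le_iff] at hD
  simpa [D, sub_eq_zero] using LinearMap.ext_iff.1 (ker_eq_top.1 hD) a

theorem stmt_2 (k : Type*) [Field k] [NumberField k] (μ : ℕ) (hμ : 0 < μ)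
    (f : k →ₗ[ℚ] k) (hf : ∀ a x : k, f (a ^ μ * x) = a ^ μ * f x) :
    ∃ c : k, ∀ x : k, f x = c * x :=
  ⟨f 1, fun x => by simpa [mul_comm] using f.map_mul_of_map_pow_mul hμ hf x 1⟩
end

section
/- Let k be a number field. For each integer n ≥ 2 let A_n := k[X]/(X^n) and let I_n ⊆ A_n be the ideal generated by the class of X. For a ∈ k^×, let σ_{a,n} : I_n → I_n be the restriction of the k-algebra endomorphism of A_n determined by X ↦ a^{-1}X; let τ_n : I_n → I_n be the restriction of the k-algebra endomorphism of A_n determined by X ↦ X + X² + ⋯ + X^{n-1}; for m ≥ n ≥ 2 let π_{m,n} : I_m → I_n be the restriction of the natural projection A_m → A_n. Suppose (α_n)_{n ≥ 2} is a family of ℚ-linear maps α_n : I_n → I_n satisfying: (i) α_n ∘ σ_{a,n} = σ_{a,n} ∘ α_n for every n ≥ 2 and every a ∈ k^×; (ii) α_n ∘ τ_n = τ_n ∘ α_n for every n ≥ 2; (iii) π_{m,n} ∘ α_m = α_n ∘ π_{m,n} for all m ≥ n ≥ 2. Then there exists a single element c ∈ k such that α_n(x) = c·x for every n ≥ 2 and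 every x ∈ I_n. -/
open Polynomial

noncomputable section

variable (k : Type*) [Field k]

theorem rootPowZero (n : ℕ) : (AdjoinRoot.root (X ^ n : k[X])) ^ n = 0 := by
  have h := AdjoinRoot.eval₂_root (X ^ n : k[X])
  simpa using h

/-- In `A_n = k[X]/(X^n)`: the `k`-algebra endomorphism determined by `X ↦ a⁻¹·X`. -/
def sigmaHom (a : kˣ) (n : ℕ) :
    AdjoinRoot (X ^ n : k[X]) →ₐ[k] AdjoinRoot (X ^ n : k[X]) :=
  AdjoinRoot.liftAlgHom _ (Algebra.ofId k _) (((a⁻¹ : kˣ) : k) • AdjoinRoot.root _) (by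
    rw [Algebra.toRingHom_ofId, ← aeval_def]
    rw [map_pow, aeval_X, _root_.smul_pow, rootPowZero, smul_zero])

/-- In `A_n = k[X]/(X^n)`: the `k`-algebra endomorphism determined by
`X ↦ X + X² + ⋯ + X^(n-1)`. -/
def tauHom (n : ℕ) :
    AdjoinRoot (X ^ n : k[X]) →ₐ[k] AdjoinRoot (X ^ n : k[X]) :=
  AdjoinRoot.liftAlgHom _ (Algebra.ofId k _) (∑ i ∈ Finset.Ico 1 n, AdjoinRoot.root (X ^ n : k[X]) ^ i) (by
    rw [Algebra.toRingHom_ofId, ← aeval_def]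
    rw [map_pow, aeval_X]
    have hdvd : AdjoinRoot.root (X ^ n : k[X]) ∣
        ∑ i ∈ Finset.Ico 1 n, AdjoinRoot.root (X ^ n : k[X]) ^ i :=
      Finset.dvd_sum fun i hi => dvd_pow_self _ (by
        have := (Finset.mem_Ico.mp hi).1; omega)
    have h0 : (AdjoinRoot.root (X ^ n : k[X])) ^ n = 0 := rootPowZero k n
    exact zero_dvd_iff.mp (h0 ▸ pow_dvd_pow_of_dvd hdvd n))

/-- The natural projection `A_m = k[X]/(X^m) → A_n = k[X]/(X^n)` for `n ≤ m`. -/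
def projHom (m n : ℕ) (h : n ≤ m) :
    AdjoinRoot (X ^ m : k[X]) →ₐ[k] AdjoinRoot (X ^ n : k[X]) :=
  AdjoinRoot.liftAlgHom _ (Algebra.ofId k _) (AdjoinRoot.root _) (by
    rw [Algebra.toRingHom_ofId, ← aeval_def]
    rw [map_pow, aeval_X, ← Nat.sub_add_cancel h, pow_add, rootPowZero, mul_zero])

/-- The ideal `I_n ⊆ A_n` generated by the class of `X`. -/
def truncIdeal (n : ℕ) : Ideal (AdjoinRoot (X ^ n : k[X])) :=
  Ideal.span {AdjoinRoot.root _}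

/-!
`σ_a` acts on `x Xⁱ` by the scalar `a⁻ⁱ`. For `a = 2` this scalar is rational, so a `ℚ`-linear
`α` commuting with `σ_2` maps `x Xⁱ` to a multiple of `Xⁱ` (the powers `2⁻ⁱ` are distinct).
Commuting with all `σ_a` gives `α (x X) = c x X`, and since `τ (x X) = x (X + ⋯ + X^(n-1))`,
comparing coefficients in `α (τ (x X)) = τ (α (x X))` gives `α (x Xⁱ) = c x Xⁱ` for every `i`.
The projection `A_n → A_2` shows that `c` does not depend on `n`.
-/

open AdjoinRoot

section TruncatedPolynomial

variable {k} {n : ℕ}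

def truncCoeff (n j : ℕ) : AdjoinRoot (X ^ n : k[X]) →ₗ[k] k :=
  (lcoeff k j).comp (modByMonicHom (monic_X_pow n))

lemma truncCoeff_mk {j : ℕ} (hj : j < n) (p : k[X]) : truncCoeff n j (mk _ p) = p.coeff j := by
  have hdiv := congrArg (coeff · j) (modByMonic_add_div p (X ^ n))
  simp only [coeff_add, coeff_X_pow_mul', not_le.2 hj, if_false, add_zero] at hdiv
  simpa [truncCoeff] using hdiv

lemma truncCoeff_root_pow {j : ℕ} (hj : j < n) (i : ℕ) :
    truncCoeff n j (root (X ^ n : k[X]) ^ i) = if j = i then 1 else 0 := by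
  rw [← mk_X, ← map_pow, truncCoeff_mk hj, coeff_X_pow]

lemma sum_truncCoeff_smul_root_pow (z : AdjoinRoot (X ^ n : k[X])) :
    ∑ j ∈ Finset.range n, truncCoeff n j z • root (X ^ n : k[X]) ^ j = z := by
  have h := (powerBasis' (monic_X_pow n : (X ^ n : k[X]).Monic)).basis.sum_repr z
  rw [PowerBasis.coe_basis, powerBasis'_gen] at h
  calc ∑ j ∈ Finset.range n, truncCoeff n j z • root (X ^ n : k[X]) ^ j
      = ∑ j ∈ Finset.range (X ^ n : k[X]).natDegree,
          truncCoeff n j z • root (X ^ n : k[X]) ^ j := by rw [natDegree_X_pow]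
    _ = z := (Fin.sum_univ_eq_sum_range _ _).symm.trans h

lemma truncCoeff_ext {z w : AdjoinRoot (X ^ n : k[X])}
    (h : ∀ j < n, truncCoeff n j z = truncCoeff n j w) : z = w := by
  rw [← sum_truncCoeff_smul_root_pow z, ← sum_truncCoeff_smul_root_pow w]
  exact Finset.sum_congr rfl fun j hj => by rw [h j (Finset.mem_range.1 hj)]

lemma truncCoeff_sum_smul_root_pow {j : ℕ} (hj : j < n) (s : Finset ℕ) (c : ℕ → k) :
    truncCoeff n j (∑ i ∈ s, c i • root (X ^ n : k[X]) ^ i) = if j ∈ s then c j else 0 := by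
  simp [truncCoeff_root_pow hj]

lemma sigmaHom_root_pow (a : kˣ) (i : ℕ) :
    sigmaHom k a n (root (X ^ n : k[X]) ^ i) = ((a⁻¹ : kˣ) : k) ^ i • root (X ^ n : k[X]) ^ i := by
  rw [map_pow, sigmaHom, liftAlgHom_root, _root_.smul_pow]

lemma truncCoeff_sigmaHom {j : ℕ} (hj : j < n) (a : kˣ) (z : AdjoinRoot (X ^ n : k[X])) :
    truncCoeff n j (sigmaHom k a n z) = ((a⁻¹ : kˣ) : k) ^ j * truncCoeff n j z := by
  conv_lhs => rw [← sum_truncCoeff_smul_root_pow z]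
  rw [map_sum]
  simp only [map_smul, sigmaHom_root_pow, smul_smul]
  rw [truncCoeff_sum_smul_root_pow hj, if_pos (Finset.mem_range.2 hj), mul_comm]

lemma eq_truncCoeff_smul_of_sigmaHom_eq {a : kˣ} (ha : ¬IsOfFinOrder a) {i : ℕ}
    {z : AdjoinRoot (X ^ n : k[X])} (h : sigmaHom k a n z = ((a⁻¹ : kˣ) : k) ^ i • z) :
    z = truncCoeff n i z • root (X ^ n : k[X]) ^ i := by
  refine truncCoeff_ext fun j hj => ?_
  rw [map_smul, truncCoeff_root_pow hj, smul_eq_mul]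
  split_ifs with hji
  · rw [hji, mul_one]
  · have hpow : ((a⁻¹ : kˣ) : k) ^ j ≠ ((a⁻¹ : kˣ) : k) ^ i := by
      rw [← Units.val_pow_eq_pow_val, ← Units.val_pow_eq_pow_val, Ne, Units.val_inj,
        pow_inj_iff_of_orderOf_eq_zero (orderOf_eq_zero_iff.2 (isOfFinOrder_inv_iff.not.2 ha))]
      exact hji
    have := congrArg (truncCoeff n j) h
    rw [truncCoeff_sigmaHom hj, map_smul, smul_eq_mul] at this
    rw [mul_zero]
    exact (mul_eq_mul_right_iff.1 this).resolve_left hpow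

-- `x • X^(i+1)`: the exponent is shifted so that the element always lies in `I_n`.
def truncMonomial (n : ℕ) (x : k) (i : ℕ) : truncIdeal k n :=
  ⟨x • root _ ^ (i + 1),
    Submodule.smul_of_tower_mem _ x (Ideal.mem_span_singleton.2 (dvd_pow_self _ i.succ_ne_zero))⟩

@[simp]
lemma coe_truncMonomial (x : k) (i : ℕ) :
    (truncMonomial n x i : AdjoinRoot (X ^ n : k[X])) = x • root (X ^ n : k[X]) ^ (i + 1) :=
  rfl

lemma truncMonomial_zero_left (i : ℕ) : truncMonomial n (0 : k) i = 0 :=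
  Subtype.ext (zero_smul k _)

lemma truncMonomial_eq_zero_of_le (x : k) {i : ℕ} (h : n ≤ i + 1) : truncMonomial n x i = 0 :=
  Subtype.ext <| by rw [coe_truncMonomial, pow_eq_zero_of_le h (rootPowZero k n), smul_zero]; rfl

lemma exists_eq_sum_truncMonomial (z : truncIdeal k n) :
    ∃ (s : Finset ℕ) (x : ℕ → k), z = ∑ i ∈ s, truncMonomial n (x i) i := by
  obtain ⟨w, hw⟩ := Ideal.mem_span_singleton'.1 z.2
  obtain ⟨p, rfl⟩ := mk_surjective w
  refine ⟨Finset.range (p.natDegree + 1), p.coeff, Subtype.ext ?_⟩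
  rw [← hw, ← aeval_eq, aeval_eq_sum_range, Finset.sum_mul, Submodule.coe_sum]
  simp [pow_succ]

lemma truncCoeff_sum_truncMonomial {i : ℕ} (hi : i + 1 < n) (s : Finset ℕ) (x : ℕ → k) :
    truncCoeff n (i + 1) (∑ l ∈ s, truncMonomial n (x l) l : truncIdeal k n) =
      if i ∈ s then x i else 0 := by
  simp [truncCoeff_root_pow hi]

lemma sigmaHom_truncMonomial (a : kˣ) (x : k) (i : ℕ) :
    sigmaHom k a n (truncMonomial n x i) =
      truncMonomial n (((a⁻¹ : kˣ) : k) ^ (i + 1) * x) i := by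
  rw [coe_truncMonomial, coe_truncMonomial, map_smul, sigmaHom_root_pow, smul_smul, mul_comm]

lemma tauHom_truncMonomial_zero (x : k) :
    tauHom k n (truncMonomial n x 0) =
      ((∑ l ∈ Finset.range (n - 1), truncMonomial n x l : truncIdeal k n) :
        AdjoinRoot (X ^ n : k[X])) := by
  rcases Nat.eq_zero_or_pos n with rfl | hn
  · have : Subsingleton (AdjoinRoot (X ^ 0 : k[X])) :=
      subsingleton_of_zero_eq_one (by simpa using (rootPowZero k 0).symm)
    exact Subsingleton.elim _ _
  rw [coe_truncMonomial, map_smul, pow_one, tauHom, liftAlgHom_root, Finset.range_eq_Ico,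
    Submodule.coe_sum, Finset.smul_sum]
  simp only [coe_truncMonomial]
  rw [Finset.sum_Ico_add' (fun l => x • root (X ^ n : k[X]) ^ l), zero_add,
    Nat.sub_add_cancel hn]

lemma coe_truncMonomial_ne_zero {x : k} (hx : x ≠ 0) {i : ℕ} (hi : i + 1 < n) :
    (truncMonomial n x i : AdjoinRoot (X ^ n : k[X])) ≠ 0 := fun h => hx <| by
  simpa [truncCoeff_root_pow hi] using congrArg (truncCoeff n (i + 1)) h

lemma projHom_truncMonomial {m : ℕ} (h : n ≤ m) (x : k) (i : ℕ) :
    projHom k m n h (truncMonomial m x i) = truncMonomial n x i := by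
  rw [coe_truncMonomial, coe_truncMonomial, map_smul, map_pow, projHom, liftAlgHom_root]

end TruncatedPolynomial

section Commuting

variable {k} [CharZero k] {n : ℕ}

def CommutesOnTruncIdeal (β : truncIdeal k n →ₗ[ℚ] truncIdeal k n)
    (f : AdjoinRoot (X ^ n : k[X]) →ₐ[k] AdjoinRoot (X ^ n : k[X])) : Prop :=
  ∀ x y : truncIdeal k n, (y : AdjoinRoot (X ^ n : k[X])) = f x →
    (β y : AdjoinRoot (X ^ n : k[X])) = f (β x)

lemma not_isOfFinOrder_two : ¬IsOfFinOrder (Units.mk0 (2 : k) two_ne_zero) := by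
  rw [isOfFinOrder_iff_pow_eq_one]
  rintro ⟨m, hm, h⟩
  have h2 : ((2 ^ m : ℕ) : k) = 1 := by simpa [Units.ext_iff] using h
  rw [Nat.cast_eq_one, Nat.pow_eq_one] at h2
  omega

variable {β : truncIdeal k n →ₗ[ℚ] truncIdeal k n}

lemma exists_map_truncMonomial_eq (hσ : ∀ a, CommutesOnTruncIdeal β (sigmaHom k a n))
    (x : k) (i : ℕ) :
    ∃ d, β (truncMonomial n x i) = truncMonomial n d i := by
  set a := Units.mk0 (2 : k) two_ne_zero
  have hq : ((a⁻¹ : kˣ) : k) ^ (i + 1) = algebraMap ℚ k ((2 : ℚ)⁻¹ ^ (i + 1)) := by simp [a]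
  have hy : ((((2 : ℚ)⁻¹ ^ (i + 1)) • truncMonomial n x i : truncIdeal k n) :
      AdjoinRoot (X ^ n : k[X])) = sigmaHom k a n (truncMonomial n x i) := by
    rw [sigmaHom_truncMonomial, Submodule.coe_smul_of_tower, ← algebraMap_smul k, ← hq,
      coe_truncMonomial, coe_truncMonomial, smul_smul]
  refine ⟨_, Subtype.ext (eq_truncCoeff_smul_of_sigmaHom_eq not_isOfFinOrder_two ?_)⟩
  rw [← hσ a _ _ hy, map_smul, Submodule.coe_smul_of_tower, ← algebraMap_smul k, hq]

lemma map_truncMonomial_zero (hσ : ∀ a, CommutesOnTruncIdeal β (sigmaHom k a n)) {c : k}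
    (hc : β (truncMonomial n 1 0) = truncMonomial n c 0) (x : k) :
    β (truncMonomial n x 0) = truncMonomial n (x * c) 0 := by
  rcases eq_or_ne x 0 with rfl | hx
  · rw [truncMonomial_zero_left, map_zero, zero_mul, truncMonomial_zero_left]
  have hxσ : (truncMonomial n x 0 : AdjoinRoot (X ^ n : k[X])) =
      sigmaHom k (Units.mk0 x hx)⁻¹ n (truncMonomial n (1 : k) 0) := by
    rw [sigmaHom_truncMonomial]
    simp
  exact Subtype.ext <| by rw [hσ _ _ _ hxσ, hc, sigmaHom_truncMonomial]; simp

lemma map_truncMonomial (hσ : ∀ a, CommutesOnTruncIdeal β (sigmaHom k a n))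
    (hτ : CommutesOnTruncIdeal β (tauHom k n)) {c : k}
    (hc : β (truncMonomial n 1 0) = truncMonomial n c 0) (x : k) (i : ℕ) :
    β (truncMonomial n x i) = truncMonomial n (x * c) i := by
  rcases le_or_gt n (i + 1) with hi | hi
  · rw [truncMonomial_eq_zero_of_le x hi, map_zero, truncMonomial_eq_zero_of_le _ hi]
  choose d hd using exists_map_truncMonomial_eq hσ x
  have hcoeff := congrArg (truncCoeff n (i + 1)) (hτ _ _ (tauHom_truncMonomial_zero x).symm)
  rw [map_truncMonomial_zero hσ hc, tauHom_truncMonomial_zero, map_sum,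
    Finset.sum_congr rfl fun l _ => hd l, truncCoeff_sum_truncMonomial hi,
    truncCoeff_sum_truncMonomial hi, if_pos (Finset.mem_range.2 (by omega)),
    if_pos (Finset.mem_range.2 (by omega))] at hcoeff
  rw [hd, hcoeff]

lemma exists_coe_map_eq_smul (hσ : ∀ a, CommutesOnTruncIdeal β (sigmaHom k a n))
    (hτ : CommutesOnTruncIdeal β (tauHom k n)) :
    ∃ c : k, ∀ z : truncIdeal k n,
      (β z : AdjoinRoot (X ^ n : k[X])) = c • (z : AdjoinRoot (X ^ n : k[X])) := by
  obtain ⟨c, hc⟩ := exists_map_truncMonomial_eq hσ 1 0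
  refine ⟨c, fun z => ?_⟩
  obtain ⟨s, x, rfl⟩ := exists_eq_sum_truncMonomial z
  simp only [map_sum, map_truncMonomial hσ hτ hc, Submodule.coe_sum, coe_truncMonomial,
    Finset.smul_sum, smul_smul, mul_comm]

end Commuting

/-- if a family of `ℚ`-linear maps `α n : I_n → I_n` (for `n ≥ 2`) commutes with
the restrictions to `I_n` of the substitutions `X ↦ a⁻¹X` (`a ∈ kˣ`) and
`X ↦ X + X² + ⋯ + X^(n-1)`, and with the natural projections `I_m → I_n` (`m ≥ n ≥ 2`), then
there is a single `c ∈ k` with `α n x = c·x` for all `n ≥ 2` and `x ∈ I_n`. -/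
theorem stmt_3 [NumberField k]
    (α : ∀ n : ℕ, ↥(truncIdeal k n) →ₗ[ℚ] ↥(truncIdeal k n))
    (hσ : ∀ n, 2 ≤ n → ∀ a : kˣ, ∀ x y : ↥(truncIdeal k n),
      (y : AdjoinRoot (X ^ n : k[X])) = sigmaHom k a n (x : AdjoinRoot (X ^ n : k[X])) →
      ((α n y : ↥(truncIdeal k n)) : AdjoinRoot (X ^ n : k[X])) =
        sigmaHom k a n ((α n x : ↥(truncIdeal k n)) : AdjoinRoot (X ^ n : k[X])))
    (hτ : ∀ n, 2 ≤ n → ∀ x y : ↥(truncIdeal k n),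
      (y : AdjoinRoot (X ^ n : k[X])) = tauHom k n (x : AdjoinRoot (X ^ n : k[X])) →
      ((α n y : ↥(truncIdeal k n)) : AdjoinRoot (X ^ n : k[X])) =
        tauHom k n ((α n x : ↥(truncIdeal k n)) : AdjoinRoot (X ^ n : k[X])))
    (hπ : ∀ m n : ℕ, 2 ≤ n → ∀ hnm : n ≤ m,
      ∀ (x : ↥(truncIdeal k m)) (y : ↥(truncIdeal k n)),
      (y : AdjoinRoot (X ^ n : k[X])) = projHom k m n hnm (x : AdjoinRoot (X ^ m : k[X])) →
      ((α n y : ↥(truncIdeal k n)) : AdjoinRoot (X ^ n : k[X])) =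
        projHom k m n hnm ((α m x : ↥(truncIdeal k m)) : AdjoinRoot (X ^ m : k[X]))) :
    ∃ c : k, ∀ n, 2 ≤ n → ∀ x : ↥(truncIdeal k n),
      ((α n x : ↥(truncIdeal k n)) : AdjoinRoot (X ^ n : k[X])) =
        c • (x : AdjoinRoot (X ^ n : k[X])) := by
  choose! c hc using fun n hn => exists_coe_map_eq_smul (hσ n hn) (hτ n hn)
  refine ⟨c 2, fun n hn x => ?_⟩
  have hproj := hπ n 2 le_rfl hn _ _ (projHom_truncMonomial hn (1 : k) 0).symm
  rw [hc n hn, hc 2 le_rfl, map_smul, projHom_truncMonomial] at hproj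
  rw [hc n hn x, smul_left_injective k (coe_truncMonomial_ne_zero one_ne_zero one_lt_two) hproj]

end
end

section
/- Let k be a field of characteristic zero, K a function field of one variable over k (a finitely generated field extension of k of transcendence degree 1), and R ⊂ K a discrete valuation ring containing k with maximal ideal 𝔪 and with fraction field K. Let L be a finite extension of K, S the integral closure of R in L, 𝔫_1, …, 𝔫_r the maximal ideals of S, and e_i the ramification index of 𝔫_i over 𝔪. Let m ≥ 1 and n_1, …, n_r ≥ 1 be integers such that n_i − 1 ≥ e_i(m − 1) for all i. Then for every x ∈ 𝔫_1^{n_1} ∩ ⋯ ∩ 𝔫_r^{n_r}, the trace Tr_{L/K}(x) lies in 𝔪^m (in particular Tr_{L/K}(x) ∈ R). -/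
/-!
Characteristic zero makes `L/K` separable, so `S` is a Dedekind domain, finite and free over
`R`. Write `𝔪 S = ∏ 𝔫ᵢ ^ eᵢ`. Since `nᵢ ≥ eᵢ (m - 1) + 1`, the element `x` lies in
`∏ 𝔫ᵢ ^ (eᵢ (m - 1) + 1) = (𝔪 S) ^ (m - 1) · ∏ 𝔫ᵢ`. The trace is `R`-linear, so it maps
this ideal into `𝔪 ^ (m - 1) · Tr(∏ 𝔫ᵢ)`, and `Tr(∏ 𝔫ᵢ) ⊆ 𝔪` because `∏ 𝔫ᵢ` lies in the
radical of `𝔪 S`: its elements are nilpotent in `S / 𝔪 S`, whose trace over the residue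
field is the reduction of the trace of `S` over `R`.
-/

open Ideal IsLocalRing UniqueFactorizationMonoid

section Dedekind

variable {R S : Type*} [CommRing R] [CommRing S] [IsDedekindDomain S] [Algebra R S]
  {ι : Type*} [Fintype ι] {𝔫 : ι → Ideal S}

theorem Ideal.prod_le_radical_of_forall_isMaximal
    (h𝔫all : ∀ P : Ideal S, P.IsMaximal → ∃ i, P = 𝔫 i) {I : Ideal S} (hI : I ≠ ⊥) :
    ∏ i, 𝔫 i ≤ I.radical := by
  rw [radical_eq_sInf]
  refine le_sInf fun P ⟨hIP, hP⟩ ↦ ?_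
  obtain ⟨i, rfl⟩ := h𝔫all P (hP.isMaximal (ne_bot_of_le_ne_bot hI hIP))
  exact prod_le_inf.trans (Finset.inf_le (Finset.mem_univ i))

theorem Ideal.map_eq_prod_pow_ramificationIdx' {p : Ideal R} (hp : p.map (algebraMap R S) ≠ ⊥)
    (h𝔫 : ∀ i, Prime (𝔫 i)) (h𝔫inj : Function.Injective 𝔫)
    (h𝔫all : ∀ P : Ideal S, P.IsMaximal → ∃ i, P = 𝔫 i) :
    p.map (algebraMap R S) = ∏ i, 𝔫 i ^ p.ramificationIdx' (𝔫 i) := by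
  classical
  have hfactors : (normalizedFactors (p.map (algebraMap R S))).toFinset ⊆
      Finset.univ.image 𝔫 := by
    intro P hP
    have hPp : Prime P := prime_of_normalized_factor P (Multiset.mem_toFinset.mp hP)
    obtain ⟨i, rfl⟩ := h𝔫all P ((isPrime_of_prime hPp).isMaximal hPp.ne_zero)
    exact Finset.mem_image_of_mem _ (Finset.mem_univ i)
  calc p.map (algebraMap R S) = (normalizedFactors (p.map (algebraMap R S))).prod :=
        (associated_iff_eq.mp (prod_normalizedFactors hp)).symm
    _ = ∏ i, 𝔫 i ^ (normalizedFactors (p.map (algebraMap R S))).count (𝔫 i) := by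
        rw [Finset.prod_multiset_count_of_subset _ _ hfactors,
          Finset.prod_image fun i _ j _ h ↦ h𝔫inj h]
    _ = ∏ i, 𝔫 i ^ p.ramificationIdx' (𝔫 i) := by
        refine Finset.prod_congr rfl fun i _ ↦ ?_
        rw [IsDedekindDomain.ramificationIdx'_eq_normalizedFactors_count hp
          (isPrime_of_prime (h𝔫 i)) (h𝔫 i).ne_zero]

theorem Ideal.iInf_pow_le_map_pow_mul_prod {p : Ideal R} (hp : p.map (algebraMap R S) ≠ ⊥)
    (h𝔫 : ∀ i, Prime (𝔫 i)) (h𝔫inj : Function.Injective 𝔫)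
    (h𝔫all : ∀ P : Ideal S, P.IsMaximal → ∃ i, P = 𝔫 i) {k : ℕ} {n : ι → ℕ}
    (hn : ∀ i, p.ramificationIdx' (𝔫 i) * k < n i) :
    ⨅ i, 𝔫 i ^ n i ≤ p.map (algebraMap R S) ^ k * ∏ i, 𝔫 i := by
  classical
  calc ⨅ i, 𝔫 i ^ n i
        ≤ Finset.univ.inf fun i ↦ 𝔫 i ^ (p.ramificationIdx' (𝔫 i) * k + 1) := by
        rw [Finset.inf_univ_eq_iInf]
        exact iInf_mono fun i ↦ pow_le_pow_right (hn i)
    _ = ∏ i, 𝔫 i ^ (p.ramificationIdx' (𝔫 i) * k + 1) :=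
        IsDedekindDomain.inf_pow_eq_prod_of_prime _ _ _ (fun i _ ↦ h𝔫 i)
          fun i _ j _ hij ↦ h𝔫inj.ne hij
    _ = p.map (algebraMap R S) ^ k * ∏ i, 𝔫 i := by
        rw [map_eq_prod_pow_ramificationIdx' hp h𝔫 h𝔫inj h𝔫all, ← Finset.prod_pow,
          ← Finset.prod_mul_distrib]
        simp only [pow_succ, pow_mul]

end Dedekind

theorem LinearMap.apply_mem_mul_of_mem_map_mul {R S : Type*} [CommRing R] [CommRing S]
    [Algebra R S]
    (f : S →ₗ[R] R) {I 𝔞 : Ideal R} {J : Ideal S} (hJ : ∀ y ∈ J, f y ∈ 𝔞) {x : S}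
    (hx : x ∈ I.map (algebraMap R S) * J) : f x ∈ I * 𝔞 := by
  have hx' : x ∈ I • J.restrictScalars R := by
    rw [← smul_restrictScalars]
    exact hx
  have := Submodule.mem_map_of_mem (f := f) hx'
  rw [Submodule.map_smul''] at this
  exact Submodule.smul_mono le_rfl (Submodule.map_le_iff_le_comap.mpr hJ) this

theorem Algebra.trace_mem_maximalIdeal_of_mem_radical {R S : Type*} [CommRing R]
    [IsLocalRing R] [CommRing S] [Algebra R S] [Module.Free R S] [Module.Finite R S] {y : S}
    (hy : y ∈ ((maximalIdeal R).map (algebraMap R S)).radical) :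
    Algebra.trace R S y ∈ maximalIdeal R := by
  obtain ⟨N, hN⟩ := hy
  rw [← Quotient.eq_zero_iff_mem, ← Algebra.trace_quotient_mk, ← isNilpotent_iff_eq_zero]
  refine isNilpotent_trace_of_isNilpotent ⟨N, ?_⟩
  rw [← map_pow, Quotient.eq_zero_iff_mem]
  exact hN

theorem Algebra.trace_mem_maximalIdeal_pow_succ {R S : Type*} [CommRing R] [IsLocalRing R]
    [CommRing S] [IsDedekindDomain S] [Algebra R S] [FaithfulSMul R S]
    [Module.Free R S] [Module.Finite R S] (hR : ¬IsField R)
    {ι : Type*} [Fintype ι] {𝔫 : ι → Ideal S} (h𝔫max : ∀ i, (𝔫 i).IsMaximal)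
    (h𝔫inj : Function.Injective 𝔫) (h𝔫all : ∀ P : Ideal S, P.IsMaximal → ∃ i, P = 𝔫 i)
    {k : ℕ} {n : ι → ℕ} (hn : ∀ i, (maximalIdeal R).ramificationIdx' (𝔫 i) * k < n i)
    {x : S} (hx : ∀ i, x ∈ 𝔫 i ^ n i) :
    Algebra.trace R S x ∈ maximalIdeal R ^ (k + 1) := by
  have hmap : (maximalIdeal R).map (algebraMap R S) ≠ ⊥ :=
    map_ne_bot_of_ne_bot (Ring.ne_bot_of_isMaximal_of_not_isField inferInstance hR)
  have hS : ¬IsField S :=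
    (Algebra.IsIntegral.isField_iff_isField (FaithfulSMul.algebraMap_injective R S)).not.mp hR
  have h𝔫 : ∀ i, Prime (𝔫 i) := fun i ↦
    prime_of_isPrime (Ring.ne_bot_of_isMaximal_of_not_isField (h𝔫max i) hS) (h𝔫max i).isPrime
  have hx' : x ∈ ((maximalIdeal R ^ k).map (algebraMap R S)) * ∏ i, 𝔫 i := by
    rw [Ideal.map_pow]
    exact iInf_pow_le_map_pow_mul_prod hmap h𝔫 h𝔫inj h𝔫all hn (Submodule.mem_iInf _ |>.mpr hx)
  rw [pow_succ]
  refine LinearMap.apply_mem_mul_of_mem_map_mul _ (fun y hy ↦ ?_) hx'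
  exact Algebra.trace_mem_maximalIdeal_of_mem_radical
    (prod_le_radical_of_forall_isMaximal h𝔫all hmap hy)

theorem stmt_5_general (k K : Type*) [Field k] [CharZero k] [Field K] [Algebra k K]
    (R : Type*) [CommRing R] [IsDomain R] [IsDiscreteValuationRing R]
    [Algebra R K] [IsFractionRing R K]
    (L : Type*) [Field L] [Algebra K L] [FiniteDimensional K L]
    [Algebra R L] [IsScalarTower R K L]
    (r : ℕ) (𝔫 : Fin r → Ideal (integralClosure R L))
    (h𝔫max : ∀ i, (𝔫 i).IsMaximal) (h𝔫inj : Function.Injective 𝔫)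
    (h𝔫all : ∀ P : Ideal (integralClosure R L), P.IsMaximal → ∃ i, P = 𝔫 i)
    (m : ℕ) (hm : 1 ≤ m) (n : Fin r → ℕ) (hn : ∀ i, 1 ≤ n i)
    (hcond : ∀ i, Ideal.ramificationIdx'
        (IsLocalRing.maximalIdeal R) (𝔫 i) * (m - 1) ≤ n i - 1)
    (x : integralClosure R L) (hx : ∀ i, x ∈ (𝔫 i) ^ (n i)) :
    ∃ y ∈ (IsLocalRing.maximalIdeal R) ^ m,
      algebraMap R K y = Algebra.trace K L (algebraMap (integralClosure R L) L x) := by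
  have : CharZero K := charZero_of_injective_algebraMap (algebraMap k K).injective
  have : FaithfulSMul R L := by
    rw [faithfulSMul_iff_algebraMap_injective, IsScalarTower.algebraMap_eq R K L]
    exact (algebraMap K L).injective.comp (IsFractionRing.injective R K)
  have : IsDedekindDomain (integralClosure R L) := integralClosure.isDedekindDomain R K L
  have : Module.Finite R (integralClosure R L) := IsIntegralClosure.finite R K L _
  have : Module.Free R (integralClosure R L) := IsIntegralClosure.module_free R K L _
  refine ⟨Algebra.intTrace R (integralClosure R L) x, ?_, Algebra.algebraMap_intTrace x⟩
  have he : ∀ i, (IsLocalRing.maximalIdeal R).ramificationIdx' (𝔫 i) * (m - 1) < n i :=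
    fun i ↦ by have := hcond i; have := hn i; omega
  rw [Algebra.intTrace_eq_trace, ← Nat.sub_add_cancel hm]
  exact Algebra.trace_mem_maximalIdeal_pow_succ (IsDiscreteValuationRing.not_isField R)
    h𝔫max h𝔫inj h𝔫all he hx

/-- trace estimate. With `R` a DVR containing `k` (char zero), fraction field `K`
a function field of one variable over `k`, `L/K` finite, `S` the integral closure of `R` in
`L` with maximal ideals `𝔫 1, …, 𝔫 r` of ramification indices `e i`, and integers `m ≥ 1`,
`n i ≥ 1` with `n i - 1 ≥ e i * (m - 1)`: for any `x ∈ ⋂ i, (𝔫 i) ^ (n i)`, the trace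
`Tr_{L/K}(x)` lies in `𝔪 ^ m`. -/
theorem stmt_5 (k K : Type*) [Field k] [CharZero k] [Field K] [Algebra k K]
    (hfg : ∃ s : Finset K, IntermediateField.adjoin k (s : Set K) = ⊤)
    (htr : ∃ x : K, IsTranscendenceBasis k (fun _ : Unit => x))
    (R : Type*) [CommRing R] [IsDomain R] [IsDiscreteValuationRing R]
    [Algebra k R] [Algebra R K] [IsFractionRing R K] [IsScalarTower k R K]
    (L : Type*) [Field L] [Algebra K L] [FiniteDimensional K L]
    [Algebra R L] [IsScalarTower R K L]
    (r : ℕ) (𝔫 : Fin r → Ideal (integralClosure R L))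
    (h𝔫max : ∀ i, (𝔫 i).IsMaximal) (h𝔫inj : Function.Injective 𝔫)
    (h𝔫all : ∀ P : Ideal (integralClosure R L), P.IsMaximal → ∃ i, P = 𝔫 i)
    (m : ℕ) (hm : 1 ≤ m) (n : Fin r → ℕ) (hn : ∀ i, 1 ≤ n i)
    (hcond : ∀ i, Ideal.ramificationIdx'
        (IsLocalRing.maximalIdeal R) (𝔫 i) * (m - 1) ≤ n i - 1)
    (x : integralClosure R L) (hx : ∀ i, x ∈ (𝔫 i) ^ (n i)) :
    ∃ y ∈ (IsLocalRing.maximalIdeal R) ^ m,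
      algebraMap R K y = Algebra.trace K L (algebraMap (integralClosure R L) L x) :=
  stmt_5_general k K R L r 𝔫 h𝔫max h𝔫inj h𝔫all m hm n hn hcond x hx
end

section
/- Let k be a field of characteristic zero and R a discrete valuation ring that is a k-algebra, with maximal ideal 𝔪, such that the composite k → R → R/𝔪 is an isomorphism of fields. Let t ∈ R be a uniformizer (a generator of 𝔪), and assume that the module of Kähler differentials Ω¹_{R/k} is a free R-module with basis the single element dt. Then for every integer n ≥ 1 the universal derivation d : R → Ω¹_{R/k} induces a well-defined k-linear bijection 𝔪/𝔪^n → Ω¹_{R/k} / 𝔪^{n−1}·Ω¹_{R/k}. -/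
/-!
Write `D x = δ x • dt`; the coordinate `δ` is a `k`-derivation of `R` with `δ t = 1`.
Well-definedness is the Leibniz rule, `D (𝔪 ^ (n + 1)) ⊆ 𝔪 ^ n • Ω`. For injectivity, a nonzero
`x ∈ 𝔪` is `u * t ^ (m + 1)` with `u` a unit, and `δ x = t ^ m * ((m + 1) * u + t * δ u)`, where the
second factor is a unit because `m + 1` is invertible in `k`; so `δ x ∈ 𝔪 ^ (n - 1)` forces
`n ≤ m + 1`. For surjectivity, since the residue field is `k`, every `a ∈ R` is congruent modulo
`𝔪 ^ (n - 1)` to a polynomial in `t` with coefficients in `k`, which is integrated termwise: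
`c * t ^ j = δ ((c / (j + 1)) • t ^ (j + 1))`.
-/

open IsLocalRing

theorem Submodule.exists_bijective_quotient_lift {S R M Q : Type*} [Ring S] [Ring R] [SMul S R]
    [AddCommGroup M] [Module R M] [Module S M] [IsScalarTower S R M] [AddCommGroup Q] [Module S Q]
    (P : Submodule R M) (g : M →ₗ[S] Q) (hker : LinearMap.ker g = P.restrictScalars S)
    (hg : Function.Surjective g) :
    ∃ f : (M ⧸ P) →ₗ[S] Q, Function.Bijective f ∧ ∀ x, f (Submodule.Quotient.mk x) = g x :=
  let e := (Submodule.Quotient.restrictScalarsEquiv S P).symm ≪≫ₗ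
    Submodule.quotEquivOfEq _ _ hker.symm ≪≫ₗ g.quotKerEquivOfSurjective hg
  ⟨e, e.bijective, fun _ => rfl⟩

theorem Module.Basis.mem_ideal_smul_top_iff {ι R M : Type*} [CommRing R] [AddCommGroup M]
    [Module R M] (b : Module.Basis ι R M) (I : Ideal R) (x : M) :
    x ∈ I • (⊤ : Submodule R M) ↔ ∀ i, b.repr x i ∈ I := by
  refine ⟨fun hx i => ?_, fun h => ?_⟩
  · simpa using Submodule.smul_top_le_comap_smul_top I (b.coord i) hx
  · rw [← b.linearCombination_repr x, Finsupp.linearCombination_apply]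
    exact Submodule.sum_mem _ fun i _ => Submodule.smul_mem_smul (h i) Submodule.mem_top

theorem Derivation.map_mem_pow_smul_top {k R M : Type*} [CommRing k] [CommRing R] [Algebra k R]
    [AddCommGroup M] [Module R M] [Module k M] [IsScalarTower k R M]
    (D : Derivation k R M) (I : Ideal R) {n : ℕ} {x : R} (hx : x ∈ I ^ (n + 1)) :
    D x ∈ I ^ n • (⊤ : Submodule R M) := by
  induction n generalizing x with
  | zero => simp
  | succ n ih =>
    rw [pow_succ] at hx
    refine Submodule.mul_induction_on hx (fun a ha b hb => ?_) (fun _ _ => by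
      simpa only [map_add] using Submodule.add_mem _)
    rw [D.leibniz]
    refine Submodule.add_mem _ (Submodule.smul_mem_smul ha Submodule.mem_top) ?_
    rw [pow_succ', Submodule.mul_smul]
    exact Submodule.smul_mem_smul hb (ih ha)

theorem Derivation.map_pow_succ_of_map_eq_one {k R : Type*} [CommRing k] [CommRing R] [Algebra k R]
    (δ : Derivation k R R) {t : R} (hδ : δ t = 1) (m : ℕ) :
    δ (t ^ (m + 1)) = (m + 1) * t ^ m := by
  rw [δ.leibniz_pow, hδ, Nat.add_sub_cancel, smul_eq_mul, mul_one, nsmul_eq_mul, Nat.cast_succ]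

theorem IsLocalRing.exists_algebraMap_add_mul {k R : Type*} [CommRing k] [CommRing R]
    [IsLocalRing R] [Algebra k R] (hres : Function.Surjective (algebraMap k (R ⧸ maximalIdeal R)))
    {t : R} (ht : maximalIdeal R = Ideal.span {t}) (a : R) :
    ∃ c a', a = algebraMap k R c + t * a' := by
  obtain ⟨c, hc⟩ := hres (Ideal.Quotient.mk _ a)
  have hac : a - algebraMap k R c ∈ Ideal.span {t} := by
    rw [← ht, ← Ideal.Quotient.eq, ← hc, Ideal.Quotient.mk_algebraMap]
  obtain ⟨a', ha'⟩ := Ideal.mem_span_singleton.mp hac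
  exact ⟨c, a', by rw [← ha']; ring⟩

section

variable {k R M : Type*} [Field k] [CharZero k] [CommRing R] [Algebra k R] {t : R}
  [AddCommGroup M] [Module R M] [Module k M] [IsScalarTower k R M]
  (D : Derivation k R M) (b : Module.Basis Unit R M)

theorem Derivation.mem_maximalIdeal_pow_of_map_mem [IsDomain R] [IsDiscreteValuationRing R]
    (δ : Derivation k R R)
    (ht : maximalIdeal R = Ideal.span {t}) (hδ : δ t = 1) {n : ℕ} {x : R}
    (hx : x ∈ maximalIdeal R) (hδx : δ x ∈ maximalIdeal R ^ (n - 1)) :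
    x ∈ maximalIdeal R ^ n := by
  rcases eq_or_ne x 0 with rfl | hx0
  · exact zero_mem _
  have hirr : Irreducible t := (IsDiscreteValuationRing.irreducible_iff_uniformizer t).mpr ht
  obtain ⟨m, u, rfl⟩ := IsDiscreteValuationRing.eq_unit_mul_pow_irreducible hx0 hirr
  obtain _ | m := m
  · simp at hx
  have hδx' : δ (u * t ^ (m + 1)) = t ^ m * ((m + 1 : R) * u + t * δ u) := by
    rw [δ.leibniz, δ.map_pow_succ_of_map_eq_one hδ, smul_eq_mul, smul_eq_mul]
    ring
  have hunit : IsUnit ((m + 1 : R) * u + t * δ u) := by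
    have hm : IsUnit (m + 1 : R) := by
      simpa using (Ne.isUnit (Nat.cast_add_one_ne_zero m : (m + 1 : k) ≠ 0)).map (algebraMap k R)
    have htδ : t * δ u ∈ maximalIdeal R := by
      rw [ht]; exact Ideal.mul_mem_right _ _ (Ideal.mem_span_singleton_self t)
    refine notMem_maximalIdeal.mp fun h => notMem_maximalIdeal.mpr (hm.mul u.isUnit) ?_
    simpa using sub_mem h htδ
  rw [hδx', ht, Ideal.span_singleton_pow, Ideal.mem_span_singleton, hunit.dvd_mul_right,
    pow_dvd_pow_iff hirr.ne_zero hirr.not_isUnit] at hδx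
  rw [ht, Ideal.span_singleton_pow, Ideal.mem_span_singleton]
  exact (pow_dvd_pow t (by omega)).mul_left _

theorem Derivation.exists_map_sub_mem_maximalIdeal_pow [IsLocalRing R]
    (hres : Function.Surjective (algebraMap k (R ⧸ maximalIdeal R))) (δ : Derivation k R R)
    (ht : maximalIdeal R = Ideal.span {t}) (hδ : δ t = 1) (m : ℕ) :
    ∀ j a, ∃ x ∈ maximalIdeal R, δ x - t ^ j * a ∈ maximalIdeal R ^ (j + m) := by
  have htm : t ∈ maximalIdeal R := ht ▸ Ideal.mem_span_singleton_self t
  induction m with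
  | zero =>
    intro j a
    exact ⟨0, zero_mem _, by simpa using Ideal.mul_mem_right a _ (Ideal.pow_mem_pow htm j)⟩
  | succ m ih =>
    intro j a
    obtain ⟨c, a', rfl⟩ := IsLocalRing.exists_algebraMap_add_mul hres ht a
    obtain ⟨x, hx, hδx⟩ := ih (j + 1) a'
    have hj : (j + 1 : k) ≠ 0 := Nat.cast_add_one_ne_zero j
    have hprim : δ ((c / (j + 1)) • t ^ (j + 1)) = t ^ j * algebraMap k R c := by
      rw [δ.map_smul, δ.map_pow_succ_of_map_eq_one hδ, Algebra.smul_def,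
        show (j + 1 : R) = algebraMap k R (j + 1) by simp, ← mul_assoc, ← map_mul,
        div_mul_cancel₀ _ hj, mul_comm]
    refine ⟨(c / (j + 1)) • t ^ (j + 1) + x,
      add_mem (Submodule.smul_of_tower_mem _ _ (Ideal.pow_mem_of_mem _ htm _ j.succ_pos)) hx, ?_⟩
    rw [map_add, hprim, show j + (m + 1) = j + 1 + m by omega]
    convert hδx using 1
    ring

theorem Derivation.map_mem_maximalIdeal_pow_smul_top_iff [IsDomain R] [IsDiscreteValuationRing R]
    (ht : maximalIdeal R = Ideal.span {t})
    (hb : b () = D t) {n : ℕ} {x : R} (hx : x ∈ maximalIdeal R) :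
    D x ∈ maximalIdeal R ^ (n - 1) • (⊤ : Submodule R M) ↔ x ∈ maximalIdeal R ^ n := by
  refine ⟨fun h => ?_, fun h => ?_⟩
  · refine ((b.coord ()).compDer D).mem_maximalIdeal_pow_of_map_mem ht ?_ hx
      ((b.mem_ideal_smul_top_iff _ _).mp h ())
    simp [← hb]
  · obtain _ | n := n
    · simp
    · exact D.map_mem_pow_smul_top _ h

theorem Derivation.exists_map_sub_mem_maximalIdeal_pow_smul_top [IsLocalRing R]
    (hres : Function.Surjective (algebraMap k (R ⧸ maximalIdeal R)))
    (ht : maximalIdeal R = Ideal.span {t}) (hb : b () = D t) (m : ℕ) (ω : M) :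
    ∃ x ∈ maximalIdeal R, D x - ω ∈ maximalIdeal R ^ m • (⊤ : Submodule R M) := by
  obtain ⟨x, hx, hδx⟩ := ((b.coord ()).compDer D).exists_map_sub_mem_maximalIdeal_pow hres ht
    (by simp [← hb]) m 0 (b.repr ω ())
  refine ⟨x, hx, (b.mem_ideal_smul_top_iff _ _).mpr fun _ => ?_⟩
  simpa using hδx

end

theorem stmt_7_general (k : Type*) [Field k] [CharZero k]
    (R : Type*) [CommRing R] [IsDomain R] [IsDiscreteValuationRing R] [Algebra k R]
    (hres : Function.Bijective (algebraMap k (R ⧸ IsLocalRing.maximalIdeal R)))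
    (t : R) (ht : IsLocalRing.maximalIdeal R = Ideal.span {t})
    (b : Module.Basis Unit R (Ω[R⁄k])) (hb : b () = KaehlerDifferential.D k R t)
    (n : ℕ) :
    ∃ f : (↥(IsLocalRing.maximalIdeal R) ⧸
          (Submodule.comap (IsLocalRing.maximalIdeal R).subtype
            ((IsLocalRing.maximalIdeal R ^ n : Ideal R) : Submodule R R))) →ₗ[k]
        ((Ω[R⁄k]) ⧸
          ((IsLocalRing.maximalIdeal R ^ (n - 1)) • (⊤ : Submodule R (Ω[R⁄k])))),
      Function.Bijective f ∧
        ∀ x : ↥(IsLocalRing.maximalIdeal R),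
          f (Submodule.Quotient.mk x) =
            Submodule.Quotient.mk (KaehlerDifferential.D k R (x : R)) := by
  set D := KaehlerDifferential.D k R
  refine Submodule.exists_bijective_quotient_lift _
    ((Submodule.mkQ _).restrictScalars k ∘ₗ D.toLinearMap ∘ₗ
      (maximalIdeal R).subtype.restrictScalars k) ?_ ?_
  · ext x
    simpa [Submodule.Quotient.mk_eq_zero] using D.map_mem_maximalIdeal_pow_smul_top_iff b ht hb x.2
  · rintro ⟨ω⟩
    obtain ⟨x, hx, hDx⟩ := D.exists_map_sub_mem_maximalIdeal_pow_smul_top b hres.2 ht hb (n - 1) ω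
    exact ⟨⟨x, hx⟩, (Submodule.Quotient.eq _).mpr hDx⟩

/-- For a DVR `R` over a field `k` of characteristic zero with residue field `k`,
uniformizer `t`, and `Ω¹_{R/k}` free on `dt`, the universal derivation induces a well-defined
`k`-linear bijection `𝔪/𝔪ⁿ → Ω¹_{R/k} / 𝔪^{n-1}·Ω¹_{R/k}` for every `n ≥ 1`. -/
theorem stmt_7 (k : Type*) [Field k] [CharZero k]
    (R : Type*) [CommRing R] [IsDomain R] [IsDiscreteValuationRing R] [Algebra k R]
    (hres : Function.Bijective (algebraMap k (R ⧸ IsLocalRing.maximalIdeal R)))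
    (t : R) (ht : IsLocalRing.maximalIdeal R = Ideal.span {t})
    (b : Module.Basis Unit R (Ω[R⁄k])) (hb : b () = KaehlerDifferential.D k R t)
    (n : ℕ) (hn : 1 ≤ n) :
    ∃ f : (↥(IsLocalRing.maximalIdeal R) ⧸
          (Submodule.comap (IsLocalRing.maximalIdeal R).subtype
            ((IsLocalRing.maximalIdeal R ^ n : Ideal R) : Submodule R R))) →ₗ[k]
        ((Ω[R⁄k]) ⧸
          ((IsLocalRing.maximalIdeal R ^ (n - 1)) • (⊤ : Submodule R (Ω[R⁄k])))),
      Function.Bijective f ∧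
        ∀ x : ↥(IsLocalRing.maximalIdeal R),
          f (Submodule.Quotient.mk x) =
            Submodule.Quotient.mk (KaehlerDifferential.D k R (x : R)) :=
  stmt_7_general k R hres t ht b hb n
end

section
/- Let K be a field. Let 𝒟₁, 𝒟₂ be quivers; let 𝒫₁, 𝒫₂, 𝒜₁, 𝒜₂ be K-linear abelian categories; let T₁ : 𝒟₁ → 𝒫₁ and T₂ : 𝒟₂ → 𝒫₂ be representations (prefunctors); let F₁ : 𝒜₁ → 𝒫₁ and F₂ : 𝒜₂ → 𝒫₂ be K-linear faithful exact functors; let R₁ : 𝒟₁ → 𝒜₁ and R₂ : 𝒟₂ → 𝒜₂ be representations; and let α₁ : F₁∘R₁ ≅ T₁ and α₂ : F₂∘R₂ ≅ T₂ be invertible morphisms of representations. Assume that every object of 𝒜₁ is a subquotient of a finite direct sum of objects of the form R₁(p), with p a vertex of 𝒟₁. Let D₁, D₂ : 𝒟₁ → 𝒟₂ be morphisms of quivers, let Φ₁, Φ₂ : 𝒫₁ → 𝒫₂ be exact K-linear functors equipped with invertible morphisms of representations φᵢ : Φᵢ∘T₁ ≅ T₂∘Dᵢ (i = 1, 2), and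 let Ψ₁, Ψ₂ : 𝒜₁ → 𝒜₂ be exact functors equipped with invertible natural transformations ρᵢ : Φᵢ∘F₁ ≅ F₂∘Ψᵢ and invertible morphisms of representations ϱᵢ : Ψᵢ∘R₁ ≅ R₂∘Dᵢ such that, for each i and each vertex p of 𝒟₁, the composite (α₂)_{Dᵢ(p)} ∘ F₂((ϱᵢ)_p) ∘ (ρᵢ)_{R₁(p)} equals (φᵢ)_p ∘ Φᵢ((α₁)_p). Suppose given a natural transformation θ : Φ₁ → Φ₂ and a family θ_D of edges θ_{D,p} : D₁(p) → D₂(p) in 𝒟₂, indexed by the vertices p of 𝒟₁, such that for every vertex p one has T₂(θ_{D,p}) ∘ (φ₁)_p = (φ₂)_p ∘ θ_{T₁(p)}. Then there exists a unique natural transformation θ̄ : Ψ₁ → Ψ₂ such that, for every vertex p of 𝒟₁, R₂(θ_{D,p}) ∘ (ϱ₁)_p = (ϱ₂)_p ∘ θ̄_{R₁(p)}, and, for every object A of 𝒜₁, F₂(θ̄_A) ∘ (ρ₁)_A = (ρ₂)_A ∘ θ_{F₁(A)}. -/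
/-!
Transport `θ` to `c := ρ₁⁻¹ ≫ θ F₁ ≫ ρ₂ : Ψ₁ ⋙ F₂ ⟶ Ψ₂ ⋙ F₂`. As `F₂` is faithful, `θ̄` is unique,
and it exists as soon as every component of `c` is the image under `F₂` of a morphism
`Ψ₁ A ⟶ Ψ₂ A`. The objects at which `c` lifts contain every `R₁ p` (the lift is
`ϱ₁ ≫ R₂ θ_D ≫ ϱ₂⁻¹`), and they are closed under finite biproducts, subobjects and quotients
because `F₂`, `Ψ₂` preserve monomorphisms and `F₂`, `Ψ₁` preserve epimorphisms. So they are
all objects of `𝒜₁`.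
-/

open CategoryTheory Limits

attribute [local instance] CategoryTheory.Limits.HasFiniteBiproducts.of_hasFiniteProducts

namespace CategoryTheory.NatTrans

variable {A C D : Type*} [Category A] [Category C] [Category D]
  {F : C ⥤ D} {G H : A ⥤ C}

def LiftsAt (c : G ⋙ F ⟶ H ⋙ F) (X : A) : Prop :=
  ∃ ℓ : G.obj X ⟶ H.obj X, F.map ℓ = c.app X

lemma eq_of_whiskerRight_eq [F.Faithful] {τ τ' : G ⟶ H}
    (h : Functor.whiskerRight τ F = Functor.whiskerRight τ' F) : τ = τ' := by
  ext X
  exact F.map_injective (NatTrans.congr_app h X)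

lemma exists_whiskerRight_eq [F.Faithful] (c : G ⋙ F ⟶ H ⋙ F) (h : ∀ X, c.LiftsAt X) :
    ∃ τ : G ⟶ H, Functor.whiskerRight τ F = c := by
  choose ℓ hℓ using h
  refine ⟨⟨ℓ, fun X Y f => F.map_injective ?_⟩, ?_⟩
  · simpa [hℓ] using c.naturality f
  · ext X
    exact hℓ X

section Abelian

variable [Abelian C] [Preadditive D] [F.PreservesZeroMorphisms] [F.Faithful]
  {c : G ⋙ F ⟶ H ⋙ F}

lemma LiftsAt.of_mono [F.PreservesMonomorphisms] [H.PreservesMonomorphisms]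
    {S X : A} (i : S ⟶ X) [Mono i] (h : c.LiftsAt X) : c.LiftsAt S := by
  obtain ⟨ℓ, hℓ⟩ := h
  have hzero : (G.map i ≫ ℓ) ≫ cokernel.π (H.map i) = 0 := F.map_injective <| by
    simpa [hℓ, ← F.map_comp] using c.naturality_assoc i (F.map (cokernel.π (H.map i)))
  refine ⟨Abelian.monoLift _ _ hzero, ?_⟩
  rw [← cancel_mono (F.map (H.map i)), ← F.map_comp, Abelian.monoLift_comp, F.map_comp, hℓ]
  exact c.naturality i

lemma LiftsAt.of_epi [F.PreservesEpimorphisms] [G.PreservesEpimorphisms]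
    {X Q : A} (q : X ⟶ Q) [Epi q] (h : c.LiftsAt X) : c.LiftsAt Q := by
  obtain ⟨ℓ, hℓ⟩ := h
  have hzero : kernel.ι (G.map q) ≫ ℓ ≫ H.map q = 0 := F.map_injective <| by
    simpa [hℓ, ← F.map_comp_assoc] using ((F.map (kernel.ι (G.map q))) ≫= c.naturality q).symm
  refine ⟨Abelian.epiDesc _ _ hzero, ?_⟩
  rw [← cancel_epi (F.map (G.map q)), ← F.map_comp, Abelian.comp_epiDesc, F.map_comp, hℓ]
  exact (c.naturality q).symm

end Abelian

lemma LiftsAt.biproduct [Preadditive A] [Preadditive C] [Preadditive D] [F.Additive]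
    [H.Additive] (c : G ⋙ F ⟶ H ⋙ F) {ι : Type} [Fintype ι] (X : ι → A) [HasBiproduct X]
    (h : ∀ j, c.LiftsAt (X j)) : c.LiftsAt (⨁ X) := by
  choose ℓ hℓ using h
  refine ⟨∑ j, G.map (biproduct.π X j) ≫ ℓ j ≫ H.map (biproduct.ι X j), ?_⟩
  have hterm : ∀ j, F.map (G.map (biproduct.π X j) ≫ ℓ j ≫ H.map (biproduct.ι X j)) =
      c.app (⨁ X) ≫ F.map (H.map (biproduct.π X j ≫ biproduct.ι X j)) := by
    intro j
    simpa [hℓ] using c.naturality_assoc (biproduct.π X j) (F.map (H.map (biproduct.ι X j)))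
  rw [F.map_sum, Finset.sum_congr rfl fun j _ => hterm j, ← Preadditive.comp_sum,
    ← F.map_sum, ← H.map_sum, biproduct.total, H.map_id, F.map_id]
  exact Category.comp_id _

end CategoryTheory.NatTrans

lemma map_comp_comp_inv_eq_of_comparison {A₁ A₂ P₁ P₂ : Type*} [Category A₁] [Category A₂]
    [Category P₁] [Category P₂] {F₁ : A₁ ⥤ P₁} {F₂ : A₂ ⥤ P₂} {Φ₁ Φ₂ : P₁ ⥤ P₂}
    {Ψ₁ Ψ₂ : A₁ ⥤ A₂} (ρ₁ : F₁ ⋙ Φ₁ ≅ Ψ₁ ⋙ F₂) (ρ₂ : F₁ ⋙ Φ₂ ≅ Ψ₂ ⋙ F₂) (θ : Φ₁ ⟶ Φ₂)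
    {X : A₁} {Y₁ Y₂ : A₂} {U : P₁} {V₁ V₂ : P₂} (a : F₁.obj X ⟶ U)
    (b₁ : F₂.obj Y₁ ⟶ V₁) (b₂ : F₂.obj Y₂ ⟶ V₂) [Mono b₂]
    (f₁ : Φ₁.obj U ⟶ V₁) (f₂ : Φ₂.obj U ⟶ V₂) (r₁ : Ψ₁.obj X ⟶ Y₁) (r₂ : Ψ₂.obj X ≅ Y₂)
    (e : Y₁ ⟶ Y₂) (t : V₁ ⟶ V₂) (he : F₂.map e ≫ b₂ = b₁ ≫ t)
    (h₁ : ρ₁.hom.app X ≫ F₂.map r₁ ≫ b₁ = Φ₁.map a ≫ f₁)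
    (h₂ : ρ₂.hom.app X ≫ F₂.map r₂.hom ≫ b₂ = Φ₂.map a ≫ f₂)
    (ht : f₁ ≫ t = θ.app U ≫ f₂) :
    F₂.map (r₁ ≫ e ≫ r₂.inv) = ρ₁.inv.app X ≫ θ.app (F₁.obj X) ≫ ρ₂.hom.app X := by
  rw [← cancel_epi (ρ₁.hom.app X), ← cancel_mono (F₂.map r₂.hom ≫ b₂), Category.assoc]
  calc ρ₁.hom.app X ≫ F₂.map (r₁ ≫ e ≫ r₂.inv) ≫ F₂.map r₂.hom ≫ b₂
      = (ρ₁.hom.app X ≫ F₂.map r₁ ≫ b₁) ≫ t := by simp [← he]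
    _ = Φ₁.map a ≫ θ.app U ≫ f₂ := by rw [h₁, Category.assoc, ht]
    _ = θ.app (F₁.obj X) ≫ ρ₂.hom.app X ≫ F₂.map r₂.hom ≫ b₂ := by
      rw [h₂, θ.naturality_assoc]
    _ = _ := by simp

theorem stmt_9_general
    (D₁ : Type*) [Quiver D₁] (D₂ : Type*) [Quiver D₂]
    (P₁ : Type*) [Category P₁]
    (P₂ : Type*) [Category P₂] [Abelian P₂]
    (A₁ : Type*) [Category A₁] [Abelian A₁]
    (A₂ : Type*) [Category A₂] [Abelian A₂]
    (T₁ : D₁ ⥤q P₁) (T₂ : D₂ ⥤q P₂)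
    (F₁ : A₁ ⥤ P₁)
    (F₂ : A₂ ⥤ P₂) [F₂.Additive] [F₂.Faithful]
      [PreservesFiniteLimits F₂] [PreservesFiniteColimits F₂]
    (R₁ : D₁ ⥤q A₁) (R₂ : D₂ ⥤q A₂)
    (α₁ : ∀ p : D₁, F₁.obj (R₁.obj p) ≅ T₁.obj p)
    (α₂ : ∀ p : D₂, F₂.obj (R₂.obj p) ≅ T₂.obj p)
    (hα₂ : ∀ {p q : D₂} (e : p ⟶ q),
      F₂.map (R₂.map e) ≫ (α₂ q).hom = (α₂ p).hom ≫ T₂.map e)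
    (hgen : ∀ X : A₁, ∃ (n : ℕ) (p : Fin n → D₁) (S : A₁)
      (i : S ⟶ ⨁ fun j => R₁.obj (p j)) (q : S ⟶ X), Mono i ∧ Epi q)
    (Df₁ Df₂ : D₁ ⥤q D₂)
    (Φ₁ : P₁ ⥤ P₂)
    (Φ₂ : P₁ ⥤ P₂)
    (φ₁ : ∀ p : D₁, Φ₁.obj (T₁.obj p) ≅ T₂.obj (Df₁.obj p))
    (φ₂ : ∀ p : D₁, Φ₂.obj (T₁.obj p) ≅ T₂.obj (Df₂.obj p))
    (Ψ₁ : A₁ ⥤ A₂) [PreservesFiniteColimits Ψ₁]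
    (Ψ₂ : A₁ ⥤ A₂) [PreservesFiniteLimits Ψ₂]
    (ρ₁ : F₁ ⋙ Φ₁ ≅ Ψ₁ ⋙ F₂) (ρ₂ : F₁ ⋙ Φ₂ ≅ Ψ₂ ⋙ F₂)
    (ϱ₁ : ∀ p : D₁, Ψ₁.obj (R₁.obj p) ≅ R₂.obj (Df₁.obj p))
    (ϱ₂ : ∀ p : D₁, Ψ₂.obj (R₁.obj p) ≅ R₂.obj (Df₂.obj p))
    (hcomp₁ : ∀ p : D₁,
      ρ₁.hom.app (R₁.obj p) ≫ F₂.map ((ϱ₁ p).hom) ≫ (α₂ (Df₁.obj p)).hom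
        = Φ₁.map ((α₁ p).hom) ≫ (φ₁ p).hom)
    (hcomp₂ : ∀ p : D₁,
      ρ₂.hom.app (R₁.obj p) ≫ F₂.map ((ϱ₂ p).hom) ≫ (α₂ (Df₂.obj p)).hom
        = Φ₂.map ((α₁ p).hom) ≫ (φ₂ p).hom)
    (θ : Φ₁ ⟶ Φ₂) (θD : ∀ p : D₁, (Df₁.obj p ⟶ Df₂.obj p))
    (hθ : ∀ p : D₁,
      (φ₁ p).hom ≫ T₂.map (θD p) = θ.app (T₁.obj p) ≫ (φ₂ p).hom) :
    ∃! θb : Ψ₁ ⟶ Ψ₂,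
      (∀ p : D₁, (ϱ₁ p).hom ≫ R₂.map (θD p) = θb.app (R₁.obj p) ≫ (ϱ₂ p).hom) ∧
      (∀ A : A₁, ρ₁.hom.app A ≫ F₂.map (θb.app A) = θ.app (F₁.obj A) ≫ ρ₂.hom.app A) := by
  have := Ψ₂.additive_of_preserves_binary_products
  let c : Ψ₁ ⋙ F₂ ⟶ Ψ₂ ⋙ F₂ := ρ₁.inv ≫ Functor.whiskerLeft F₁ θ ≫ ρ₂.hom
  have hR (p : D₁) : F₂.map ((ϱ₁ p).hom ≫ R₂.map (θD p) ≫ (ϱ₂ p).inv) = c.app (R₁.obj p) :=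
    map_comp_comp_inv_eq_of_comparison ρ₁ ρ₂ θ (α₁ p).hom (α₂ _).hom (α₂ _).hom
      (φ₁ p).hom (φ₂ p).hom (ϱ₁ p).hom (ϱ₂ p) _ _ (hα₂ (θD p)) (hcomp₁ p) (hcomp₂ p) (hθ p)
  have hlifts (X : A₁) : c.LiftsAt X := by
    obtain ⟨n, p, S, i, q, _, _⟩ := hgen X
    exact ((NatTrans.LiftsAt.biproduct c _ fun j => ⟨_, hR (p j)⟩).of_mono i).of_epi q
  obtain ⟨τ, hτ⟩ := NatTrans.exists_whiskerRight_eq c hlifts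
  have hτ_app (A : A₁) : F₂.map (τ.app A) = c.app A := NatTrans.congr_app hτ A
  refine ⟨τ, ⟨fun p => ?_, fun A => ?_⟩, fun τ' ⟨_, hτ'⟩ => NatTrans.eq_of_whiskerRight_eq (F := F₂) ?_⟩
  · rw [← Iso.comp_inv_eq, Category.assoc]
    exact F₂.map_injective ((hR p).trans (hτ_app _).symm)
  · simp [hτ_app, c]
  · ext A
    simp [hτ, c, ← hτ' A]

/-- lifting of natural transformations to universal (Nori-type) categories. -/
theorem stmt_9 (K : Type*) [Field K]
    (D₁ : Type*) [Quiver D₁] (D₂ : Type*) [Quiver D₂]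
    (P₁ : Type*) [Category P₁] [Abelian P₁] [Linear K P₁]
    (P₂ : Type*) [Category P₂] [Abelian P₂] [Linear K P₂]
    (A₁ : Type*) [Category A₁] [Abelian A₁] [Linear K A₁]
    (A₂ : Type*) [Category A₂] [Abelian A₂] [Linear K A₂]
    (T₁ : D₁ ⥤q P₁) (T₂ : D₂ ⥤q P₂)
    (F₁ : A₁ ⥤ P₁) [F₁.Additive] [F₁.Linear K] [F₁.Faithful]
      [PreservesFiniteLimits F₁] [PreservesFiniteColimits F₁]
    (F₂ : A₂ ⥤ P₂) [F₂.Additive] [F₂.Linear K] [F₂.Faithful]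
      [PreservesFiniteLimits F₂] [PreservesFiniteColimits F₂]
    (R₁ : D₁ ⥤q A₁) (R₂ : D₂ ⥤q A₂)
    (α₁ : ∀ p : D₁, F₁.obj (R₁.obj p) ≅ T₁.obj p)
    (hα₁ : ∀ {p q : D₁} (e : p ⟶ q),
      F₁.map (R₁.map e) ≫ (α₁ q).hom = (α₁ p).hom ≫ T₁.map e)
    (α₂ : ∀ p : D₂, F₂.obj (R₂.obj p) ≅ T₂.obj p)
    (hα₂ : ∀ {p q : D₂} (e : p ⟶ q),
      F₂.map (R₂.map e) ≫ (α₂ q).hom = (α₂ p).hom ≫ T₂.map e)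
    (hgen : ∀ X : A₁, ∃ (n : ℕ) (p : Fin n → D₁) (S : A₁)
      (i : S ⟶ ⨁ fun j => R₁.obj (p j)) (q : S ⟶ X), Mono i ∧ Epi q)
    (Df₁ Df₂ : D₁ ⥤q D₂)
    (Φ₁ : P₁ ⥤ P₂) [Φ₁.Additive] [Φ₁.Linear K]
      [PreservesFiniteLimits Φ₁] [PreservesFiniteColimits Φ₁]
    (Φ₂ : P₁ ⥤ P₂) [Φ₂.Additive] [Φ₂.Linear K]
      [PreservesFiniteLimits Φ₂] [PreservesFiniteColimits Φ₂]
    (φ₁ : ∀ p : D₁, Φ₁.obj (T₁.obj p) ≅ T₂.obj (Df₁.obj p))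
    (hφ₁ : ∀ {p q : D₁} (e : p ⟶ q),
      Φ₁.map (T₁.map e) ≫ (φ₁ q).hom = (φ₁ p).hom ≫ T₂.map (Df₁.map e))
    (φ₂ : ∀ p : D₁, Φ₂.obj (T₁.obj p) ≅ T₂.obj (Df₂.obj p))
    (hφ₂ : ∀ {p q : D₁} (e : p ⟶ q),
      Φ₂.map (T₁.map e) ≫ (φ₂ q).hom = (φ₂ p).hom ≫ T₂.map (Df₂.map e))
    (Ψ₁ : A₁ ⥤ A₂) [PreservesFiniteLimits Ψ₁] [PreservesFiniteColimits Ψ₁]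
    (Ψ₂ : A₁ ⥤ A₂) [PreservesFiniteLimits Ψ₂] [PreservesFiniteColimits Ψ₂]
    (ρ₁ : F₁ ⋙ Φ₁ ≅ Ψ₁ ⋙ F₂) (ρ₂ : F₁ ⋙ Φ₂ ≅ Ψ₂ ⋙ F₂)
    (ϱ₁ : ∀ p : D₁, Ψ₁.obj (R₁.obj p) ≅ R₂.obj (Df₁.obj p))
    (hϱ₁ : ∀ {p q : D₁} (e : p ⟶ q),
      Ψ₁.map (R₁.map e) ≫ (ϱ₁ q).hom = (ϱ₁ p).hom ≫ R₂.map (Df₁.map e))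
    (ϱ₂ : ∀ p : D₁, Ψ₂.obj (R₁.obj p) ≅ R₂.obj (Df₂.obj p))
    (hϱ₂ : ∀ {p q : D₁} (e : p ⟶ q),
      Ψ₂.map (R₁.map e) ≫ (ϱ₂ q).hom = (ϱ₂ p).hom ≫ R₂.map (Df₂.map e))
    (hcomp₁ : ∀ p : D₁,
      ρ₁.hom.app (R₁.obj p) ≫ F₂.map ((ϱ₁ p).hom) ≫ (α₂ (Df₁.obj p)).hom
        = Φ₁.map ((α₁ p).hom) ≫ (φ₁ p).hom)
    (hcomp₂ : ∀ p : D₁,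
      ρ₂.hom.app (R₁.obj p) ≫ F₂.map ((ϱ₂ p).hom) ≫ (α₂ (Df₂.obj p)).hom
        = Φ₂.map ((α₁ p).hom) ≫ (φ₂ p).hom)
    (θ : Φ₁ ⟶ Φ₂) (θD : ∀ p : D₁, (Df₁.obj p ⟶ Df₂.obj p))
    (hθ : ∀ p : D₁,
      (φ₁ p).hom ≫ T₂.map (θD p) = θ.app (T₁.obj p) ≫ (φ₂ p).hom) :
    ∃! θb : Ψ₁ ⟶ Ψ₂,
      (∀ p : D₁, (ϱ₁ p).hom ≫ R₂.map (θD p) = θb.app (R₁.obj p) ≫ (ϱ₂ p).hom) ∧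
      (∀ A : A₁, ρ₁.hom.app A ≫ F₂.map (θb.app A) = θ.app (F₁.obj A) ≫ ρ₂.hom.app A) :=
  stmt_9_general D₁ D₂ P₁ P₂ A₁ A₂ T₁ T₂ F₁ F₂ R₁ R₂ α₁ α₂ hα₂ hgen Df₁ Df₂ Φ₁ Φ₂ φ₁ φ₂ Ψ₁ Ψ₂ ρ₁ ρ₂
    ϱ₁ ϱ₂ hcomp₁ hcomp₂ θ θD hθ
end

section
/- In the situation of the lifting proposition for natural transformations (same data and hypotheses: quivers 𝒟₁, 𝒟₂; K-linear abelian categories 𝒫₁, 𝒫₂, 𝒜₁, 𝒜₂; representations T₁, T₂, R₁, R₂ with isomorphisms α₁, α₂; F₁, F₂ faithful exact; every object of 𝒜₁ a subquotient of a finite direct sum of objects R₁(p); exact functors Φ₁, Φ₂, Ψ₁, Ψ₂ with compatible isomorphisms φᵢ, ρᵢ, ϱᵢ; θ : Φ₁ → Φ₂ and θ_D compatible with φ₁, φ₂; and θ̄ : Ψ₁ → Ψ₂ the unique lifted natural transformation satisfying R₂(θ_{D,p}) ∘ (ϱ₁)_p = (ϱ₂)_p ∘ θ̄_{R₁(p)}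 and F₂(θ̄_A) ∘ (ρ₁)_A = (ρ₂)_A ∘ θ_{F₁(A)}): if θ_P is a monomorphism for every object P of 𝒫₁, then θ̄_A is a monomorphism for every object A of 𝒜₁; and if θ_P is an epimorphism for every object P of 𝒫₁, then θ̄_A is an epimorphism for every object A of 𝒜₁. -/
open CategoryTheory Limits

attribute [local instance] CategoryTheory.Limits.HasFiniteBiproducts.of_hasFiniteProducts

namespace CategoryTheory.Functor

variable {C D : Type*} [Category C] [Category D] (F : C ⥤ D) [F.Faithful]
  {X Y : C} {f : X ⟶ Y} {X' Y' : D} {g : X' ⟶ Y'}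

lemma mono_of_comm_sq_iso (e₁ : X' ≅ F.obj X) (e₂ : Y' ≅ F.obj Y)
    (w : e₁.hom ≫ F.map f = g ≫ e₂.hom) [Mono g] : Mono f := by
  have hf : F.map f = e₁.inv ≫ g ≫ e₂.hom := by rw [← w, Iso.inv_hom_id_assoc]
  have : Mono (F.map f) := by rw [hf]; infer_instance
  exact F.mono_of_mono_map this

lemma epi_of_comm_sq_iso (e₁ : X' ≅ F.obj X) (e₂ : Y' ≅ F.obj Y)
    (w : e₁.hom ≫ F.map f = g ≫ e₂.hom) [Epi g] : Epi f := by
  have hf : F.map f = e₁.inv ≫ g ≫ e₂.hom := by rw [← w, Iso.inv_hom_id_assoc]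
  have : Epi (F.map f) := by rw [hf]; infer_instance
  exact F.epi_of_epi_map this

end CategoryTheory.Functor

theorem stmt_10_general
    (P₁ : Type*) [Category P₁] (P₂ : Type*) [Category P₂]
    (A₁ : Type*) [Category A₁] (A₂ : Type*) [Category A₂]
    (F₁ : A₁ ⥤ P₁) (F₂ : A₂ ⥤ P₂) [F₂.Faithful]
    (Φ₁ : P₁ ⥤ P₂) (Φ₂ : P₁ ⥤ P₂) (Ψ₁ : A₁ ⥤ A₂) (Ψ₂ : A₁ ⥤ A₂)
    (ρ₁ : F₁ ⋙ Φ₁ ≅ Ψ₁ ⋙ F₂) (ρ₂ : F₁ ⋙ Φ₂ ≅ Ψ₂ ⋙ F₂)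
    (θ : Φ₁ ⟶ Φ₂) (θb : Ψ₁ ⟶ Ψ₂)
    (hθb₂ : ∀ A : A₁,
      ρ₁.hom.app A ≫ F₂.map (θb.app A) = θ.app (F₁.obj A) ≫ ρ₂.hom.app A) :
    ((∀ P : P₁, Mono (θ.app P)) → ∀ A : A₁, Mono (θb.app A)) ∧
    ((∀ P : P₁, Epi (θ.app P)) → ∀ A : A₁, Epi (θb.app A)) :=
  ⟨fun _ A => F₂.mono_of_comm_sq_iso (ρ₁.app A) (ρ₂.app A) (hθb₂ A),
    fun _ A => F₂.epi_of_comm_sq_iso (ρ₁.app A) (ρ₂.app A) (hθb₂ A)⟩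

/-- the lifted natural transformation is a (mono/epi)morphism objectwise if the
original one is. -/
theorem stmt_10 (K : Type*) [Field K]
    (D₁ : Type*) [Quiver D₁] (D₂ : Type*) [Quiver D₂]
    (P₁ : Type*) [Category P₁] [Abelian P₁] [Linear K P₁]
    (P₂ : Type*) [Category P₂] [Abelian P₂] [Linear K P₂]
    (A₁ : Type*) [Category A₁] [Abelian A₁] [Linear K A₁]
    (A₂ : Type*) [Category A₂] [Abelian A₂] [Linear K A₂]
    (T₁ : D₁ ⥤q P₁) (T₂ : D₂ ⥤q P₂)
    (F₁ : A₁ ⥤ P₁) [F₁.Additive] [F₁.Linear K] [F₁.Faithful]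
      [PreservesFiniteLimits F₁] [PreservesFiniteColimits F₁]
    (F₂ : A₂ ⥤ P₂) [F₂.Additive] [F₂.Linear K] [F₂.Faithful]
      [PreservesFiniteLimits F₂] [PreservesFiniteColimits F₂]
    (R₁ : D₁ ⥤q A₁) (R₂ : D₂ ⥤q A₂)
    (α₁ : ∀ p : D₁, F₁.obj (R₁.obj p) ≅ T₁.obj p)
    (hα₁ : ∀ {p q : D₁} (e : p ⟶ q),
      F₁.map (R₁.map e) ≫ (α₁ q).hom = (α₁ p).hom ≫ T₁.map e)
    (α₂ : ∀ p : D₂, F₂.obj (R₂.obj p) ≅ T₂.obj p)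
    (hα₂ : ∀ {p q : D₂} (e : p ⟶ q),
      F₂.map (R₂.map e) ≫ (α₂ q).hom = (α₂ p).hom ≫ T₂.map e)
    (hgen : ∀ X : A₁, ∃ (n : ℕ) (p : Fin n → D₁) (S : A₁)
      (i : S ⟶ ⨁ fun j => R₁.obj (p j)) (q : S ⟶ X), Mono i ∧ Epi q)
    (Df₁ Df₂ : D₁ ⥤q D₂)
    (Φ₁ : P₁ ⥤ P₂) [Φ₁.Additive] [Φ₁.Linear K]
      [PreservesFiniteLimits Φ₁] [PreservesFiniteColimits Φ₁]
    (Φ₂ : P₁ ⥤ P₂) [Φ₂.Additive] [Φ₂.Linear K]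
      [PreservesFiniteLimits Φ₂] [PreservesFiniteColimits Φ₂]
    (φ₁ : ∀ p : D₁, Φ₁.obj (T₁.obj p) ≅ T₂.obj (Df₁.obj p))
    (hφ₁ : ∀ {p q : D₁} (e : p ⟶ q),
      Φ₁.map (T₁.map e) ≫ (φ₁ q).hom = (φ₁ p).hom ≫ T₂.map (Df₁.map e))
    (φ₂ : ∀ p : D₁, Φ₂.obj (T₁.obj p) ≅ T₂.obj (Df₂.obj p))
    (hφ₂ : ∀ {p q : D₁} (e : p ⟶ q),
      Φ₂.map (T₁.map e) ≫ (φ₂ q).hom = (φ₂ p).hom ≫ T₂.map (Df₂.map e))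
    (Ψ₁ : A₁ ⥤ A₂) [PreservesFiniteLimits Ψ₁] [PreservesFiniteColimits Ψ₁]
    (Ψ₂ : A₁ ⥤ A₂) [PreservesFiniteLimits Ψ₂] [PreservesFiniteColimits Ψ₂]
    (ρ₁ : F₁ ⋙ Φ₁ ≅ Ψ₁ ⋙ F₂) (ρ₂ : F₁ ⋙ Φ₂ ≅ Ψ₂ ⋙ F₂)
    (ϱ₁ : ∀ p : D₁, Ψ₁.obj (R₁.obj p) ≅ R₂.obj (Df₁.obj p))
    (hϱ₁ : ∀ {p q : D₁} (e : p ⟶ q),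
      Ψ₁.map (R₁.map e) ≫ (ϱ₁ q).hom = (ϱ₁ p).hom ≫ R₂.map (Df₁.map e))
    (ϱ₂ : ∀ p : D₁, Ψ₂.obj (R₁.obj p) ≅ R₂.obj (Df₂.obj p))
    (hϱ₂ : ∀ {p q : D₁} (e : p ⟶ q),
      Ψ₂.map (R₁.map e) ≫ (ϱ₂ q).hom = (ϱ₂ p).hom ≫ R₂.map (Df₂.map e))
    (hcomp₁ : ∀ p : D₁,
      ρ₁.hom.app (R₁.obj p) ≫ F₂.map ((ϱ₁ p).hom) ≫ (α₂ (Df₁.obj p)).hom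
        = Φ₁.map ((α₁ p).hom) ≫ (φ₁ p).hom)
    (hcomp₂ : ∀ p : D₁,
      ρ₂.hom.app (R₁.obj p) ≫ F₂.map ((ϱ₂ p).hom) ≫ (α₂ (Df₂.obj p)).hom
        = Φ₂.map ((α₁ p).hom) ≫ (φ₂ p).hom)
    (θ : Φ₁ ⟶ Φ₂) (θD : ∀ p : D₁, (Df₁.obj p ⟶ Df₂.obj p))
    (hθ : ∀ p : D₁,
      (φ₁ p).hom ≫ T₂.map (θD p) = θ.app (T₁.obj p) ≫ (φ₂ p).hom)
    (θb : Ψ₁ ⟶ Ψ₂)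
    (hθb₁ : ∀ p : D₁, (ϱ₁ p).hom ≫ R₂.map (θD p) = θb.app (R₁.obj p) ≫ (ϱ₂ p).hom)
    (hθb₂ : ∀ A : A₁,
      ρ₁.hom.app A ≫ F₂.map (θb.app A) = θ.app (F₁.obj A) ≫ ρ₂.hom.app A) :
    ((∀ P : P₁, Mono (θ.app P)) → ∀ A : A₁, Mono (θb.app A)) ∧
    ((∀ P : P₁, Epi (θ.app P)) → ∀ A : A₁, Epi (θb.app A)) :=
  stmt_10_general P₁ P₂ A₁ A₂ F₁ F₂ Φ₁ Φ₂ Ψ₁ Ψ₂ ρ₁ ρ₂ θ θb hθb₂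
end
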